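/- arXiv:2506.23070 — 6 statements merged into one kernel-verified Lean document; each statement's English description precedes it below -/
import Mathlib

section
/- For every positive integer n, the n-th harmonic sum satisfies ln(n) + γ < Σ_{k=1}^{n} 1/k < ln(n) + γ + 1/(2n), where γ is the Euler–Mascheroni constant. -/
/-!
`harmonic n - log n` decreases strictly to `γ`, which gives the lower bound, while
`harmonic n - log n - 1/(2n)` increases strictly to `γ`. Its increments are positive
because `log (1 + 1/x) < (1/x + 1/(x+1)) / 2`, which is `t < sinh t` at `t = log (1 + 1/x)`.
-/

open Filter Topology

namespace Real

lemma log_lt_half_sub_inv {y : ℝ} (hy : 1 < y) : log y < (y - y⁻¹) / 2 := by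
  rw [← sinh_log (by linarith)]
  exact self_lt_sinh_iff.2 (log_pos hy)

lemma log_add_one_sub_log_lt {x : ℝ} (hx : 0 < x) :
    log (x + 1) - log x < (x⁻¹ + (x + 1)⁻¹) / 2 := by
  have hy : 1 < (x + 1) / x := by rw [one_lt_div hx]; linarith
  have key := log_lt_half_sub_inv hy
  rw [log_div (by linarith) hx.ne', inv_div] at key
  convert key using 2
  field_simp
  ring

lemma strictMono_harmonic_sub_log_sub_inv_two_mul :
    StrictMono fun n : ℕ ↦ (harmonic n : ℝ) - log n - (2 * (n : ℝ))⁻¹ := by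
  refine strictMono_nat_of_lt_succ fun n ↦ ?_
  rcases Nat.eq_zero_or_pos n with rfl | hn
  · norm_num
  have hlog := log_add_one_sub_log_lt (x := n) (by exact_mod_cast hn)
  push_cast [harmonic_succ, mul_inv]
  linarith

lemma tendsto_harmonic_sub_log_sub_inv_two_mul :
    Tendsto (fun n : ℕ ↦ (harmonic n : ℝ) - log n - (2 * (n : ℝ))⁻¹) atTop
      (𝓝 eulerMascheroniConstant) := by
  have h : Tendsto (fun n : ℕ ↦ (2 * (n : ℝ))⁻¹) atTop (𝓝 0) :=
    tendsto_inv_atTop_zero.comp <|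
      tendsto_natCast_atTop_atTop.const_mul_atTop two_pos
  simpa using tendsto_harmonic_sub_log.sub h

lemma harmonic_sub_log_sub_inv_two_mul_lt_eulerMascheroniConstant (n : ℕ) :
    (harmonic n : ℝ) - log n - (2 * (n : ℝ))⁻¹ < eulerMascheroniConstant :=
  (strictMono_harmonic_sub_log_sub_inv_two_mul n.lt_succ_self).trans_le <|
    strictMono_harmonic_sub_log_sub_inv_two_mul.monotone.ge_of_tendsto
      tendsto_harmonic_sub_log_sub_inv_two_mul _

end Real

theorem harmonic_bounds (n : ℕ) (hn : 0 < n) :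
    Real.log n + Real.eulerMascheroniConstant < ∑ k ∈ Finset.Icc 1 n, (1 : ℝ) / k ∧
    ∑ k ∈ Finset.Icc 1 n, (1 : ℝ) / k <
      Real.log n + Real.eulerMascheroniConstant + 1 / (2 * n) := by
  have hsum : ∑ k ∈ Finset.Icc 1 n, (1 : ℝ) / k = harmonic n := by
    simp [harmonic_eq_sum_Icc]
  have hlower := Real.eulerMascheroniConstant_lt_eulerMascheroniSeq' n
  rw [Real.eulerMascheroniSeq', if_neg hn.ne'] at hlower
  have hupper := Real.harmonic_sub_log_sub_inv_two_mul_lt_eulerMascheroniConstant n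
  rw [hsum, one_div]
  constructor <;> linarith
end

section
/- For every positive integer m, the sum of 1/k over odd integers k with 5 ≤ k ≤ 6m+3 and k not divisible by 3 is strictly less than ln(3^{1/2} · 2^{2/3}) + γ/3 − 1 + (1/3)·ln(m) + 5/(6m). -/
/-!
By inclusion–exclusion over the multiples of 2 and 3, the sum equals
`H(6m+1) - H(3m)/2 - H(2m)/3 + H(m)/6 - 1`, where `H` is the harmonic number. Bounding each
harmonic number by `log n + γ < H n < log (n + 1) + γ` (monotonicity of the two Euler–Mascheroni
sequences), the `log m` and `γ` terms both appear with weight `1 - 1/2 - 1/3 + 1/6 = 1/3`, the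
constants combine to `log 3 / 2 + 2 log 2 / 3`, and the remaining error is at most `3 / (6m)`.
-/

open Finset Real

theorem filter_odd_not_dvd_three_Icc_five_succ (n : ℕ) :
    (Icc 5 (6 * (n + 1) + 3)).filter (fun k => Odd k ∧ ¬ 3 ∣ k) =
      insert (6 * n + 7) (insert (6 * n + 5)
        ((Icc 5 (6 * n + 3)).filter (fun k => Odd k ∧ ¬ 3 ∣ k))) := by
  ext k
  simp only [mem_insert, mem_filter, mem_Icc, Nat.odd_iff]
  omega

theorem sum_filter_odd_not_dvd_three_Icc_five_eq_harmonic {K : Type*} [Field K] [LinearOrder K]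
    [IsStrictOrderedRing K] (m : ℕ) :
    ∑ k ∈ (Icc 5 (6 * m + 3)).filter (fun k => Odd k ∧ ¬ 3 ∣ k), (1 : K) / k =
      harmonic (6 * m + 1) - harmonic (3 * m) / 2 - harmonic (2 * m) / 3 + harmonic m / 6 - 1 := by
  induction m with
  | zero => norm_num [harmonic_succ]
  | succ n ih =>
    rw [filter_odd_not_dvd_three_Icc_five_succ, sum_insert (by simp), sum_insert (by simp), ih,
      show 6 * (n + 1) + 1 = 6 * n + 1 + 6 by ring, show 3 * (n + 1) = 3 * n + 3 by ring,
      show 2 * (n + 1) = 2 * n + 2 by ring]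
    simp only [harmonic_succ, Rat.cast_add]
    push_cast
    field_simp
    ring

theorem log_add_le_log_add_div {x y : ℝ} (hx : 0 < x) (hy : 0 ≤ y) :
    log (x + y) ≤ log x + y / x := by
  have h := log_le_sub_one_of_pos (x := (x + y) / x) (by positivity)
  rw [log_div (by positivity) hx.ne', add_div, div_self hx.ne'] at h
  linarith

theorem log_add_eulerMascheroniConstant_lt_harmonic {n : ℕ} (hn : n ≠ 0) :
    log n + eulerMascheroniConstant < harmonic n := by
  have h := eulerMascheroniConstant_lt_eulerMascheroniSeq' n
  rw [eulerMascheroniSeq', if_neg hn] at h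
  linarith

theorem harmonic_lt_log_add_one_add_eulerMascheroniConstant (n : ℕ) :
    harmonic n < log (n + 1) + eulerMascheroniConstant := by
  have h := eulerMascheroniSeq_lt_eulerMascheroniConstant n
  rw [eulerMascheroniSeq] at h
  linarith

theorem odd_nondiv3_recip_sum_bound (m : ℕ) (hm : 0 < m) :
    ∑ k ∈ (Finset.Icc 5 (6 * m + 3)).filter (fun k => Odd k ∧ ¬ (3 ∣ k)), (1 : ℝ) / k <
      Real.log ((3 : ℝ) ^ ((1 : ℝ) / 2) * (2 : ℝ) ^ ((2 : ℝ) / 3)) +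
        Real.eulerMascheroniConstant / 3 - 1 + (1 / 3) * Real.log m + 5 / (6 * m) := by
  have hm' : (0 : ℝ) < m := by exact_mod_cast hm
  have log_mul_m (c : ℝ) (hc : 0 < c) : log (c * m) = log c + log m := log_mul hc.ne' hm'.ne'
  rw [sum_filter_odd_not_dvd_three_Icc_five_eq_harmonic]
  have h6 := harmonic_lt_log_add_one_add_eulerMascheroniConstant (6 * m + 1)
  have h3 := log_add_eulerMascheroniConstant_lt_harmonic (n := 3 * m) (by omega)
  have h2 := log_add_eulerMascheroniConstant_lt_harmonic (n := 2 * m) (by omega)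
  have h1 := harmonic_lt_log_add_one_add_eulerMascheroniConstant m
  push_cast at h6 h3 h2
  rw [show (6 : ℝ) * m + 1 + 1 = 6 * m + 2 by ring] at h6
  rw [log_mul_m 3 three_pos] at h3
  rw [log_mul_m 2 two_pos] at h2
  have e6 := log_add_le_log_add_div (x := 6 * m) (y := 2) (by positivity) zero_le_two
  have e1 := log_add_le_log_add_div hm' zero_le_one
  have log_six : log 6 = log 2 + log 3 := by
    rw [show (6 : ℝ) = 2 * 3 by norm_num, log_mul two_ne_zero three_ne_zero]
  rw [log_mul_m 6 (by norm_num), log_six] at e6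
  rw [log_mul (by positivity) (by positivity), log_rpow three_pos, log_rpow two_pos]
  have error_lt : 2 / (6 * m) + 1 / m / 6 < 5 / (6 * (m : ℝ)) := by
    field_simp
    norm_num
  linarith
end

section
/- Let N be a positive integer whose Collatz trajectory reaches 1 and suppose O(N) ≤ 512. Then Res(N) = 2^{E(N)}/(3^{O(N)}·N) < 2. -/
/-- The Collatz map: odd `n ↦ 3n+1`, even `n ↦ n/2`. -/
def collatz (n : ℕ) : ℕ := if n % 2 = 0 then n / 2 else 3 * n + 1

/-- The Collatz trajectory of `N` reaches `1`. -/
def ReachesOne (N : ℕ) : Prop := ∃ n, collatz^[n] N = 1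

/-- Number of iterations needed for the trajectory of `N` to first reach `1`. -/
noncomputable def collatzSteps (N : ℕ) : ℕ := sInf {n | collatz^[n] N = 1}

/-- `E(N)`: the number of even terms in the trajectory from `N` to `1`. -/
noncomputable def collatzE (N : ℕ) : ℕ :=
  ((Finset.range (collatzSteps N)).filter (fun j => (collatz^[j] N) % 2 = 0)).card

/-- `O(N)`: the number of odd terms greater than `1` in the trajectory from `N` to `1`. -/
noncomputable def collatzO (N : ℕ) : ℕ :=
  ((Finset.range (collatzSteps N)).filter
    (fun j => (collatz^[j] N) % 2 = 1 ∧ 1 < collatz^[j] N)).card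

/-- The residue `Res(N) = 2^{E(N)} / (3^{O(N)} · N)`. -/
noncomputable def collatzRes (N : ℕ) : ℝ :=
  2 ^ (collatzE N) / (3 ^ (collatzO N) * (N : ℝ))

/-- The list of odd iterates greater than `1` in the trajectory of `N` down to `1`. -/
noncomputable def oddIterates (N : ℕ) : List ℕ :=
  ((List.range (collatzSteps N)).map (fun j => collatz^[j] N)).filter
    (fun x => decide (x % 2 = 1 ∧ 1 < x))


/-!
Peeling off one step of the trajectory multiplies `Res` by `1 + 1/(3x)` at an odd `x > 1` and
leaves it unchanged at an even one, so `Res(N) = ∏ (1 + 1/(3x))` over the odd iterates `x > 1`,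
which are pairwise distinct. Since `3n + 1` and `n / 2` are prime to `3` whenever `n` is, a
trajectory starting prime to `3` stays so; then the product is at most the product over the
`512` smallest integers `> 1` prime to `6`, which is computed to be below `81/41 < 2`.
If `3 ∣ N`, halving reduces to odd `N`, whose own factor is at most `82/81` once `N ≥ 27`,
and `82/81 · 81/41 = 2`; the remaining `N = 3, 9, 15, 21` are checked directly.
-/

open Finset

theorem ReachesOne.iterate_collatzSteps {N : ℕ} (h : ReachesOne N) :
    collatz^[collatzSteps N] N = 1 :=
  Nat.sInf_mem h

theorem collatzSteps_le {N n : ℕ} (hn : collatz^[n] N = 1) : collatzSteps N ≤ n :=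
  Nat.sInf_le hn

theorem collatzSteps_eq_of_iterate {N n : ℕ} (h1 : collatz^[n] N = 1)
    (h2 : ∀ m < n, collatz^[m] N ≠ 1) : collatzSteps N = n :=
  (collatzSteps_le h1).antisymm <|
    not_lt.mp fun hlt => h2 _ hlt (ReachesOne.iterate_collatzSteps ⟨n, h1⟩)

theorem collatzSteps_one : collatzSteps 1 = 0 :=
  collatzSteps_eq_of_iterate rfl (by simp)

theorem collatz_of_even {N : ℕ} (hN : N % 2 = 0) : collatz N = N / 2 :=
  if_pos hN

theorem collatz_of_odd {N : ℕ} (hN : N % 2 = 1) : collatz N = 3 * N + 1 :=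
  if_neg (by omega)

theorem ReachesOne.pos {N : ℕ} (h : ReachesOne N) : 0 < N := by
  obtain ⟨n, hn⟩ := h
  refine Nat.pos_of_ne_zero fun h0 => ?_
  rw [h0, Function.iterate_fixed (by rfl : collatz 0 = 0)] at hn
  exact zero_ne_one hn

theorem reachesOne_collatz {N : ℕ} (h : ReachesOne N) (h1 : N ≠ 1) : ReachesOne (collatz N) := by
  obtain ⟨_ | n, hn⟩ := h
  · exact absurd hn h1
  · exact ⟨n, hn⟩

theorem ReachesOne.collatzSteps_eq_succ {N : ℕ} (h : ReachesOne N) (h1 : N ≠ 1) :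
    collatzSteps N = collatzSteps (collatz N) + 1 := by
  refine le_antisymm (collatzSteps_le (reachesOne_collatz h h1).iterate_collatzSteps) ?_
  have hN := h.iterate_collatzSteps
  obtain ⟨m, hm⟩ : ∃ m, collatzSteps N = m + 1 :=
    Nat.exists_eq_succ_of_ne_zero fun h0 => h1 (by rwa [h0] at hN)
  rw [hm] at hN ⊢
  exact Nat.succ_le_succ (collatzSteps_le hN)

@[elab_as_elim]
theorem ReachesOne.induction {P : ℕ → Prop} {N : ℕ} (h : ReachesOne N) (one : P 1)
    (step : ∀ N, ReachesOne N → N ≠ 1 → P (collatz N) → P N) : P N := by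
  induction hs : collatzSteps N generalizing N with
  | zero =>
    have hN := h.iterate_collatzSteps
    rw [hs, Function.iterate_zero_apply] at hN
    rwa [hN]
  | succ s ih =>
    have h1 : N ≠ 1 := by rintro rfl; simp [collatzSteps_one] at hs
    have := h.collatzSteps_eq_succ h1
    exact step N h h1 (ih (reachesOne_collatz h h1) (by omega))

theorem ReachesOne.card_filter_iterate {N : ℕ} (h : ReachesOne N) (h1 : N ≠ 1)
    (p : ℕ → Prop) [DecidablePred p] :
    ((range (collatzSteps N)).filter fun j => p (collatz^[j] N)).card =
      (if p N then 1 else 0) +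
        ((range (collatzSteps (collatz N))).filter fun j => p (collatz^[j] (collatz N))).card := by
  rw [h.collatzSteps_eq_succ h1, card_filter, card_filter, sum_range_succ', add_comm]
  rfl

theorem ReachesOne.collatzE_eq {N : ℕ} (h : ReachesOne N) (h1 : N ≠ 1) :
    collatzE N = (if N % 2 = 0 then 1 else 0) + collatzE (collatz N) :=
  h.card_filter_iterate h1 (· % 2 = 0)

theorem ReachesOne.collatzO_eq {N : ℕ} (h : ReachesOne N) (h1 : N ≠ 1) :
    collatzO N = (if N % 2 = 1 ∧ 1 < N then 1 else 0) + collatzO (collatz N) :=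
  h.card_filter_iterate h1 fun x => x % 2 = 1 ∧ 1 < x

theorem ReachesOne.collatzO_eq_of_even {N : ℕ} (h : ReachesOne N) (hN : N % 2 = 0) :
    collatzO N = collatzO (collatz N) := by
  rw [h.collatzO_eq (by omega), if_neg (by omega), zero_add]

theorem ReachesOne.collatzO_eq_of_odd {N : ℕ} (h : ReachesOne N) (hN : N % 2 = 1) (h1 : N ≠ 1) :
    collatzO N = collatzO (collatz N) + 1 := by
  rw [h.collatzO_eq h1, if_pos ⟨hN, by omega⟩, add_comm]

theorem ReachesOne.oddIterates_eq {N : ℕ} (h : ReachesOne N) (h1 : N ≠ 1) :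
    oddIterates N =
      if N % 2 = 1 ∧ 1 < N then N :: oddIterates (collatz N) else oddIterates (collatz N) := by
  rw [oddIterates, h.collatzSteps_eq_succ h1, List.range_succ_eq_map, List.map_cons,
    List.map_map, List.filter_cons]
  by_cases hN : N % 2 = 1 ∧ 1 < N <;> simp [hN, oddIterates, Function.comp_def]

theorem ReachesOne.length_oddIterates {N : ℕ} (h : ReachesOne N) :
    (oddIterates N).length = collatzO N := by
  refine h.induction (by simp [oddIterates, collatzO, collatzSteps_one]) ?_
  intro N h h1 ih
  rw [h.oddIterates_eq h1, h.collatzO_eq h1]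
  split_ifs <;> simp [ih, add_comm]

theorem of_mem_oddIterates {N x : ℕ} (hx : x ∈ oddIterates N) : x % 2 = 1 ∧ 1 < x := by
  simpa [oddIterates] using (List.of_mem_filter hx)

theorem ReachesOne.injOn_iterate {N : ℕ} (h : ReachesOne N) :
    Set.InjOn (fun j => collatz^[j] N) (Set.Iio (collatzSteps N)) := by
  suffices ∀ i j, i < j → j < collatzSteps N → collatz^[i] N ≠ collatz^[j] N by
    intro i hi j hj hij
    by_contra hne
    rcases Nat.lt_or_gt_of_ne hne with hlt | hlt
    · exact this i j hlt hj hij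
    · exact this j i hlt hi hij.symm
  intro i j hij hj heq
  -- a repetition before reaching 1 would let the trajectory reach 1 in fewer steps
  have hshort : collatz^[collatzSteps N - j + i] N = 1 := by
    rw [Function.iterate_add_apply, heq, ← Function.iterate_add_apply,
      Nat.sub_add_cancel hj.le, h.iterate_collatzSteps]
  have := collatzSteps_le hshort
  omega

theorem ReachesOne.nodup_oddIterates {N : ℕ} (h : ReachesOne N) : (oddIterates N).Nodup :=
  (List.nodup_range.map_on fun _ hi _ hj =>
    h.injOn_iterate (List.mem_range.mp hi) (List.mem_range.mp hj)).filter _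

theorem ReachesOne.not_three_dvd_of_mem_oddIterates {N : ℕ} (h : ReachesOne N)
    (hN : ¬ 3 ∣ N) : ∀ x ∈ oddIterates N, ¬ 3 ∣ x := by
  revert hN
  refine h.induction (by simp [oddIterates, collatzSteps_one]) ?_
  intro N h h1 ih hN x hx
  have hc : ¬ 3 ∣ collatz N := by
    unfold collatz
    split_ifs <;> omega
  rw [h.oddIterates_eq h1] at hx
  split_ifs at hx
  · rcases List.mem_cons.mp hx with rfl | hx
    exacts [hN, ih hc x hx]
  · exact ih hc x hx

noncomputable def collatzFactor (x : ℕ) : ℝ := 1 + 1 / (3 * x)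

theorem collatzFactor_antitoneOn : AntitoneOn collatzFactor (Set.Ioi 0) := by
  intro x hx y _ hxy
  have hx' : (0 : ℝ) < x := Nat.cast_pos.mpr hx
  unfold collatzFactor
  gcongr

theorem collatzRes_nonneg (N : ℕ) : 0 ≤ collatzRes N := by
  unfold collatzRes; positivity

theorem ReachesOne.collatzRes_eq_of_even {N : ℕ} (h : ReachesOne N) (hN : N % 2 = 0) :
    collatzRes N = collatzRes (collatz N) := by
  have h1 : N ≠ 1 := by omega
  have hhalf : (N : ℝ) = 2 * (collatz N : ℕ) := by
    rw [collatz_of_even hN]; exact_mod_cast (Nat.mul_div_cancel' (Nat.dvd_of_mod_eq_zero hN)).symm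
  have hpos : (0 : ℝ) < (collatz N : ℕ) := by
    rw [collatz_of_even hN]; exact_mod_cast Nat.div_pos (by have := h.pos; omega) two_pos
  rw [collatzRes, collatzRes, h.collatzE_eq h1, h.collatzO_eq_of_even hN, if_pos hN, hhalf,
    pow_add]
  field_simp

theorem ReachesOne.collatzRes_eq_of_odd {N : ℕ} (h : ReachesOne N) (hN : N % 2 = 1)
    (h1 : N ≠ 1) : collatzRes N = collatzFactor N * collatzRes (collatz N) := by
  have hpos : (0 : ℝ) < N := Nat.cast_pos.mpr h.pos
  rw [collatzRes, collatzRes, h.collatzE_eq h1, h.collatzO_eq_of_odd hN h1, if_neg (by omega),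
    zero_add, collatz_of_odd hN, collatzFactor, pow_succ]
  push_cast
  field_simp

theorem ReachesOne.collatzRes_eq_prod {N : ℕ} (h : ReachesOne N) :
    collatzRes N = ((oddIterates N).map collatzFactor).prod := by
  refine h.induction (by simp [collatzRes, collatzE, collatzO, oddIterates, collatzSteps_one]) ?_
  intro N h h1 ih
  rw [h.oddIterates_eq h1]
  rcases Nat.mod_two_eq_zero_or_one N with hN | hN
  · rw [h.collatzRes_eq_of_even hN, if_neg (by omega), ih]
  · rw [h.collatzRes_eq_of_odd hN h1, if_pos ⟨hN, by omega⟩, ih, List.map_cons, List.prod_cons]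

theorem Finset.prod_le_prod_range_card {R : Type*} [CommSemiring R] [PartialOrder R]
    [IsOrderedRing R] {f : ℕ → R} (hf : Antitone f) (hf0 : ∀ i, 0 ≤ f i) (s : Finset ℕ) :
    ∏ i ∈ s, f i ≤ ∏ i ∈ range s.card, f i := by
  induction s using Finset.induction_on_max with
  | empty => simp
  | insert a s ha ih =>
    have has : a ∉ s := fun h => lt_irrefl a (ha a h)
    have hcard : s.card ≤ a := by
      simpa using card_le_card fun x hx => mem_range.mpr (ha x hx)
    rw [prod_insert has, card_insert_of_notMem has, prod_range_succ, mul_comm]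
    exact mul_le_mul ih (hf hcard) (hf0 a) (prod_nonneg fun i _ => hf0 i)

/-- The `i`-th integer `> 1` prime to `6`: `5, 7, 11, 13, 17, …`. -/
def nthCoprimeSix (i : ℕ) : ℕ := if i % 2 = 0 then 3 * i + 5 else 3 * i + 4

theorem nthCoprimeSix_pos (i : ℕ) : 0 < nthCoprimeSix i := by
  unfold nthCoprimeSix; split <;> omega

theorem nthCoprimeSix_mono : Monotone nthCoprimeSix := by
  intro i j hij
  unfold nthCoprimeSix; split_ifs <;> omega

theorem nthCoprimeSix_div_three {x : ℕ} (h2 : x % 2 = 1) (h3 : ¬ 3 ∣ x) (h1 : 1 < x) :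
    nthCoprimeSix ((x - 4) / 3) = x := by
  unfold nthCoprimeSix; split_ifs <;> omega

theorem prod_collatzFactor_le {T : Finset ℕ} (hT : ∀ x ∈ T, x % 2 = 1 ∧ ¬ 3 ∣ x ∧ 1 < x)
    {n : ℕ} (hn : T.card ≤ n) :
    ∏ x ∈ T, collatzFactor x ≤ ∏ i ∈ range n, collatzFactor (nthCoprimeSix i) := by
  have hinv : ∀ x ∈ T, nthCoprimeSix ((x - 4) / 3) = x := fun x hx =>
    nthCoprimeSix_div_three (hT x hx).1 (hT x hx).2.1 (hT x hx).2.2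
  have hinj : Set.InjOn (fun x => (x - 4) / 3) T := fun x hx y hy hxy => by
    rw [← hinv x hx, ← hinv y hy]; exact congrArg nthCoprimeSix hxy
  have hanti : Antitone fun i => collatzFactor (nthCoprimeSix i) := fun i j hij =>
    collatzFactor_antitoneOn (nthCoprimeSix_pos i) (nthCoprimeSix_pos j) (nthCoprimeSix_mono hij)
  have hone : ∀ i, 1 ≤ collatzFactor (nthCoprimeSix i) := fun i => by
    unfold collatzFactor; simp only [le_add_iff_nonneg_right]; positivity
  calc ∏ x ∈ T, collatzFactor x
      = ∏ i ∈ T.image fun x => (x - 4) / 3, collatzFactor (nthCoprimeSix i) := by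
        rw [prod_image hinj]; exact prod_congr rfl fun x hx => by rw [hinv x hx]
    _ ≤ ∏ i ∈ range (T.image fun x => (x - 4) / 3).card, collatzFactor (nthCoprimeSix i) :=
        prod_le_prod_range_card hanti (fun i => zero_le_one.trans (hone i)) _
    _ ≤ ∏ i ∈ range n, collatzFactor (nthCoprimeSix i) :=
        prod_le_prod_of_subset_of_one_le (range_subset_range.mpr (card_image_le.trans hn))
          (fun i _ => zero_le_one.trans (hone i)) fun i _ _ => hone i

theorem ReachesOne.collatzRes_le {N n : ℕ} (h : ReachesOne N) (h3 : ¬ 3 ∣ N)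
    (hO : collatzO N ≤ n) :
    collatzRes N ≤ ∏ i ∈ range n, collatzFactor (nthCoprimeSix i) := by
  rw [h.collatzRes_eq_prod, ← List.prod_toFinset _ h.nodup_oddIterates]
  refine prod_collatzFactor_le (fun x hx => ?_) ?_
  · have hx := List.mem_toFinset.mp hx
    exact ⟨(of_mem_oddIterates hx).1, h.not_three_dvd_of_mem_oddIterates h3 x hx,
      (of_mem_oddIterates hx).2⟩
  · rwa [List.toFinset_card_of_nodup h.nodup_oddIterates, h.length_oddIterates]

set_option maxRecDepth 10000 in
theorem prod_collatzFactor_nthCoprimeSix_lt :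
    ∏ i ∈ range 512, collatzFactor (nthCoprimeSix i) < 81 / 41 := by
  have hfactor : ∀ i, collatzFactor (nthCoprimeSix i) =
      ((3 * nthCoprimeSix i + 1 : ℕ) : ℝ) / ((3 * nthCoprimeSix i : ℕ) : ℝ) := fun i => by
    have : (0 : ℝ) < nthCoprimeSix i := Nat.cast_pos.mpr (nthCoprimeSix_pos i)
    unfold collatzFactor; push_cast; field_simp
  have hden : (0 : ℝ) < ((∏ i ∈ range 512, 3 * nthCoprimeSix i : ℕ) : ℝ) :=
    Nat.cast_pos.mpr (prod_pos fun i _ => Nat.mul_pos three_pos (nthCoprimeSix_pos i))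
  have hnum : 41 * ∏ i ∈ range 512, (3 * nthCoprimeSix i + 1) <
      81 * ∏ i ∈ range 512, 3 * nthCoprimeSix i := by
    decide
  simp_rw [hfactor]
  rw [prod_div_distrib, ← Nat.cast_prod, ← Nat.cast_prod, div_lt_div_iff₀ hden (by norm_num),
    mul_comm]
  exact_mod_cast hnum

theorem collatzRes_eq_of_iterate {N n e o : ℕ} (h1 : collatz^[n] N = 1)
    (h2 : ∀ m < n, collatz^[m] N ≠ 1)
    (hE : ((range n).filter fun j => collatz^[j] N % 2 = 0).card = e)
    (hO : ((range n).filter fun j => collatz^[j] N % 2 = 1 ∧ 1 < collatz^[j] N).card = o) :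
    collatzRes N = 2 ^ e / (3 ^ o * N) := by
  rw [collatzRes, collatzE, collatzO, collatzSteps_eq_of_iterate h1 h2, hE, hO]

theorem collatzRes_lt_two_of_lt_27 {N : ℕ} (hN : N % 2 = 1) (h3 : 3 ∣ N) (h27 : N < 27) :
    collatzRes N < 2 := by
  obtain rfl | rfl | rfl | rfl : N = 3 ∨ N = 9 ∨ N = 15 ∨ N = 21 := by omega
  · rw [collatzRes_eq_of_iterate (n := 7) (e := 5) (o := 2) (by decide) (by decide) (by decide)
      (by decide)]
    norm_num
  · rw [collatzRes_eq_of_iterate (n := 19) (e := 13) (o := 6) (by decide) (by decide)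
      (by decide) (by decide)]
    norm_num
  · rw [collatzRes_eq_of_iterate (n := 17) (e := 12) (o := 5) (by decide) (by decide)
      (by decide) (by decide)]
    norm_num
  · rw [collatzRes_eq_of_iterate (n := 7) (e := 6) (o := 1) (by decide) (by decide) (by decide)
      (by decide)]
    norm_num

theorem ReachesOne.collatzRes_lt_two_of_odd {N : ℕ} (h : ReachesOne N) (hN : N % 2 = 1)
    (h27 : 27 ≤ N) (hO : collatzO N ≤ 512) : collatzRes N < 2 := by
  have h1 : N ≠ 1 := by omega
  have hfactor : collatzFactor N ≤ 82 / 81 :=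
    calc collatzFactor N ≤ collatzFactor 27 :=
          collatzFactor_antitoneOn (Set.mem_Ioi.mpr (by norm_num)) (Set.mem_Ioi.mpr (by omega)) h27
      _ = 82 / 81 := by norm_num [collatzFactor]
  have hrest : collatzRes (collatz N) ≤ ∏ i ∈ range 512, collatzFactor (nthCoprimeSix i) :=
    (reachesOne_collatz h h1).collatzRes_le (by rw [collatz_of_odd hN]; omega)
      (by rw [h.collatzO_eq_of_odd hN h1] at hO; omega)
  calc collatzRes N = collatzFactor N * collatzRes (collatz N) := h.collatzRes_eq_of_odd hN h1
    _ ≤ 82 / 81 * ∏ i ∈ range 512, collatzFactor (nthCoprimeSix i) :=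
        mul_le_mul hfactor hrest (collatzRes_nonneg _) (by norm_num)
    _ < 82 / 81 * (81 / 41) := by gcongr; exact prod_collatzFactor_nthCoprimeSix_lt
    _ = 2 := by norm_num

theorem res_lt_two_of_O_le_general (N : ℕ) (h : ReachesOne N)
    (hO : collatzO N ≤ 512) : collatzRes N < 2 := by
  induction N using Nat.strong_induction_on with
  | _ N ih =>
  by_cases h3 : 3 ∣ N
  · rcases Nat.mod_two_eq_zero_or_one N with heven | hodd
    · have hlt : collatz N < N := by rw [collatz_of_even heven]; have := h.pos; omega
      rw [h.collatzRes_eq_of_even heven]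
      exact ih _ hlt (reachesOne_collatz h (by omega)) (h.collatzO_eq_of_even heven ▸ hO)
    · rcases lt_or_ge N 27 with h27 | h27
      · exact collatzRes_lt_two_of_lt_27 hodd h3 h27
      · exact h.collatzRes_lt_two_of_odd hodd h27 hO
  · calc collatzRes N ≤ ∏ i ∈ range 512, collatzFactor (nthCoprimeSix i) := h.collatzRes_le h3 hO
      _ < 81 / 41 := prod_collatzFactor_nthCoprimeSix_lt
      _ < 2 := by norm_num

theorem res_lt_two_of_O_le (N : ℕ) (hN : 0 < N) (h : ReachesOne N)
    (hO : collatzO N ≤ 512) : collatzRes N < 2 :=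
  res_lt_two_of_O_le_general N h hO
end

section
/- Let N be a positive integer and let D, O, E be nonnegative integers with D = O + E. If 1 ≤ 2^E/(3^O · N) ≤ 2, then E = ⌈log₆3 · D + log₆N⌉. -/
theorem E_eq_ceil_of_D (N : ℕ) (hN : 0 < N) (D O E : ℕ) (hD : D = O + E)
    (h1 : 1 ≤ (2 : ℝ) ^ E / (3 ^ O * N)) (h2 : (2 : ℝ) ^ E / (3 ^ O * N) ≤ 2) :
    (E : ℤ) = ⌈Real.logb 6 3 * D + Real.logb 6 N⌉ := by
  have hN' : (0:ℝ) < N := by exact_mod_cast hN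
  have hpos : (0:ℝ) < 3 ^ O * N := by positivity
  have hA : (3:ℝ) ^ O * N ≤ 2 ^ E := by
    rw [le_div_iff₀ hpos] at h1; linarith
  have hB : (2:ℝ) ^ E ≤ 2 * (3 ^ O * N) := by
    rw [div_le_iff₀ hpos] at h2; linarith
  have h6 : (1:ℝ) < 6 := by norm_num
  have hsum : Real.logb 6 2 + Real.logb 6 3 = 1 := by
    rw [← Real.logb_mul (by norm_num) (by norm_num)]
    norm_num [Real.logb_self_eq_one]
  have hl3 : 0 < Real.logb 6 3 := Real.logb_pos h6 (by norm_num)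
  have hlogA : (O:ℝ) * Real.logb 6 3 + Real.logb 6 N ≤ E * Real.logb 6 2 := by
    have := Real.logb_le_logb_of_le h6 hpos hA
    rwa [Real.logb_mul (by positivity) (by positivity), Real.logb_pow,
      Real.logb_pow] at this
  have hlogB : (E:ℝ) * Real.logb 6 2 ≤ Real.logb 6 2 + ((O:ℝ) * Real.logb 6 3 + Real.logb 6 N) := by
    have h2E : (0:ℝ) < 2 ^ E := by positivity
    have := Real.logb_le_logb_of_le h6 h2E hB
    rwa [Real.logb_mul (by norm_num) (by positivity),
      Real.logb_mul (by positivity) (by positivity), Real.logb_pow,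
      Real.logb_pow] at this
  symm
  rw [Int.ceil_eq_iff]
  subst hD
  push_cast
  constructor <;> nlinarith
end

section
/- Let N be a positive integer and O, E, D nonnegative integers with D = O + E, and suppose 1 ≤ 2^E/(3^O · N) ≤ 2. If N is not a power of 2, or if O = 0 and E = log₂N, then D = ⌈log₂6 · O + log₂N⌉. -/
theorem D_eq_ceil_of_O (N : ℕ) (hN : 0 < N) (O E D : ℕ) (hD : D = O + E)
    (h1 : 1 ≤ (2 : ℝ) ^ E / (3 ^ O * N)) (h2 : (2 : ℝ) ^ E / (3 ^ O * N) ≤ 2)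
    (h : (¬ ∃ k, N = 2 ^ k) ∨ (O = 0 ∧ (N : ℝ) = 2 ^ E)) :
    (D : ℤ) = ⌈Real.logb 2 6 * O + Real.logb 2 N⌉ := by
  have hNR : (0:ℝ) < N := by exact_mod_cast hN
  have hx : (0:ℝ) < 3 ^ O * (N:ℝ) := by positivity
  have hle : (3:ℝ) ^ O * N ≤ 2 ^ E := by
    have := (le_div_iff₀ hx).mp h1; linarith
  have hlt : (2:ℝ) ^ E < 2 * (3 ^ O * N) := by
    have h2' : (2:ℝ) ^ E ≤ 2 * (3 ^ O * N) := by
      have := (div_le_iff₀ hx).mp h2; linarith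
    rcases h with hnp | ⟨hO, hNE⟩
    · rcases lt_or_eq_of_le h2' with h' | h'
      · exact h'
      · exfalso
        have hnat : 2 ^ E = 2 * (3 ^ O * N) := by exact_mod_cast h'
        have hm : 0 < 3 ^ O * N := by positivity
        have hE : 1 ≤ E := by
          by_contra hE
          have : E = 0 := by omega
          subst this
          simp only [pow_zero] at hnat
          omega
        have h2E : 2 ^ E = 2 * 2 ^ (E - 1) := by
          rw [← pow_succ']
          congr 1
          omega
        have hkey : 3 ^ O * N = 2 ^ (E - 1) := by omega
        have hO0 : O = 0 := by
          by_contra hO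
          have h3 : 3 ∣ 3 ^ O * N := Dvd.dvd.mul_right (dvd_pow_self 3 hO) N
          rw [hkey] at h3
          have := Nat.Prime.dvd_of_dvd_pow (p := 3) (by norm_num) h3
          norm_num at this
        exact hnp ⟨E - 1, by simpa [hO0] using hkey⟩
    · rw [hO, pow_zero, one_mul, hNE]
      have : (0:ℝ) < 2 ^ E := by positivity
      linarith
  -- logarithm bounds for x := 3^O * N
  have hub : Real.logb 2 ((3:ℝ) ^ O * N) ≤ E := by
    have := Real.logb_le_logb_of_le (b := 2) (by norm_num) hx hle
    rwa [Real.logb_pow, Real.logb_self_eq_one (by norm_num), mul_one] at this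
  have hlb : (E:ℝ) - 1 < Real.logb 2 ((3:ℝ) ^ O * N) := by
    have hlt' : (2:ℝ) ^ E / 2 < 3 ^ O * N := by linarith
    have := Real.logb_lt_logb (b := 2) (by norm_num) (by positivity) hlt'
    rwa [Real.logb_div (by positivity) (by norm_num), Real.logb_pow,
      Real.logb_self_eq_one (by norm_num), mul_one] at this
  have key : Real.logb 2 6 * O + Real.logb 2 N
      = (O:ℝ) + Real.logb 2 ((3:ℝ) ^ O * N) := by
    rw [show (6:ℝ) = 2 * 3 by norm_num,
      Real.logb_mul (by norm_num) (by norm_num),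
      Real.logb_self_eq_one (by norm_num),
      Real.logb_mul (by positivity) (by positivity), Real.logb_pow]
    ring
  rw [key]
  have hceil : ⌈Real.logb 2 ((3:ℝ) ^ O * N)⌉ = (E:ℤ) := by
    rw [Int.ceil_eq_iff]
    constructor
    · push_cast; linarith
    · push_cast; linarith
  rw [show ((O:ℝ)) = ((O:ℤ):ℝ) by push_cast; ring, add_comm,
    Int.ceil_add_intCast, hceil, hD]
  push_cast
  ring
end

section
/- Let N be a positive integer and D, O, E nonnegative integers with D = O + E and 1 ≤ 2^E/(3^O · N) ≤ 2. Then D = ⌊log₃6 · E − log₃N⌋. -/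
theorem D_eq_floor_of_E (N : ℕ) (hN : 0 < N) (D O E : ℕ) (hD : D = O + E)
    (h1 : 1 ≤ (2 : ℝ) ^ E / (3 ^ O * N)) (h2 : (2 : ℝ) ^ E / (3 ^ O * N) ≤ 2) :
    (D : ℤ) = ⌊Real.logb 3 6 * E - Real.logb 3 N⌋ := by
  have hN' : (0:ℝ) < N := by exact_mod_cast hN
  have key : Real.logb 3 ((2:ℝ)^E/(3^O*N))
      = E * Real.logb 3 2 - (O + Real.logb 3 N) := by
    rw [Real.logb_div (by positivity) (by positivity),
        Real.logb_mul (by positivity) (by positivity),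
        Real.logb_pow, Real.logb_pow,
        Real.logb_self_eq_one (by norm_num)]
    ring
  have h0 : 0 ≤ Real.logb 3 ((2:ℝ)^E/(3^O*N)) :=
    Real.logb_nonneg (by norm_num) h1
  have hub : Real.logb 3 ((2:ℝ)^E/(3^O*N)) ≤ Real.logb 3 2 :=
    Real.logb_le_logb_of_le (by norm_num) (by positivity) h2
  have hlt : Real.logb 3 2 < 1 := by
    have := Real.logb_lt_logb (b := 3) (by norm_num) (by norm_num : (0:ℝ) < 2)
      (by norm_num : (2:ℝ) < 3)
    simpa [Real.logb_self_eq_one] using this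
  have h6 : Real.logb 3 6 = Real.logb 3 2 + 1 := by
    rw [show (6:ℝ) = 2*3 by norm_num, Real.logb_mul (by norm_num) (by norm_num),
        Real.logb_self_eq_one (by norm_num)]
  rw [eq_comm, Int.floor_eq_iff]
  constructor <;> push_cast <;> rw [h6] <;> subst hD <;> push_cast <;>
    nlinarith [key, h0, hub, hlt]
end
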